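/- Let (u, v, pu, pv) solve the FLRW null geodesic system on an interval I with angular momentum L ≥ 0. Then (t·(pv − pu))' = L²/(t·r³) ≥ 0 on I. If moreover the mass shell relation 4t²r²·pu·pv = L² holds on I, then (t·pv)' = L²/(2·t·r³) ≥ 0 and (t·pu)' = −L²/(2·t·r³) ≤ 0 on I. -/

import Mathlib

/-- The time coordinate `t = (v+u)²/4` along a curve in double null coordinates. -/
noncomputable def tOf (u v : ℝ → ℝ) (s : ℝ) : ℝ := (v s + u s) ^ 2 / 4

/-- The radial coordinate `r = v − u` along a curve in double null coordinates. -/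
noncomputable def rOf (u v : ℝ → ℝ) (s : ℝ) : ℝ := v s - u s

/-- **The FLRW null geodesic system** with angular momentum `L` on a set `I ⊆ ℝ`:
`u' = pu`, `v' = pv`,
`pu' = −t^{−1/2}·pu² − (1/2)(1/(2t^{1/2}) + 1/r)·L²/(t²r²)`,
`pv' = −t^{−1/2}·pv² − (1/2)(1/(2t^{1/2}) − 1/r)·L²/(t²r²)`,
where `t = (v+u)²/4` and `r = v−u` are required to satisfy `v+u > 0`, `r > 0` on `I`,
and `pu ≥ 0`, `pv ≥ 0` on `I`. -/
def FLRWGeodesicSystem (I : Set ℝ) (L : ℝ) (u v pu pv : ℝ → ℝ) : Prop :=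
  (∀ s ∈ I, 0 < v s + u s) ∧
  (∀ s ∈ I, 0 < rOf u v s) ∧
  (∀ s ∈ I, 0 ≤ pu s) ∧
  (∀ s ∈ I, 0 ≤ pv s) ∧
  (∀ s ∈ I, HasDerivAt u (pu s) s) ∧
  (∀ s ∈ I, HasDerivAt v (pv s) s) ∧
  (∀ s ∈ I, HasDerivAt pu
    (-(pu s) ^ 2 / Real.sqrt (tOf u v s)
      - 1 / 2 * (1 / (2 * Real.sqrt (tOf u v s)) + 1 / rOf u v s) * L ^ 2
          / ((tOf u v s) ^ 2 * (rOf u v s) ^ 2)) s) ∧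
  (∀ s ∈ I, HasDerivAt pv
    (-(pv s) ^ 2 / Real.sqrt (tOf u v s)
      - 1 / 2 * (1 / (2 * Real.sqrt (tOf u v s)) - 1 / rOf u v s) * L ^ 2
          / ((tOf u v s) ^ 2 * (rOf u v s) ^ 2)) s)

/-!
Write `t = (√t)²` with `√t = (v+u)/2`, so that `t' = √t·(pu+pv)`. Each momentum equation has the
form `p' = −p²/√t − k`, and then `(t·p)' = √t·pu·pv − t·k`: the quadratic terms cancel. The two
values of `k` differ only in the sign of their `1/r` part, so this part alone survives in
`(t·(pv − pu))'`. The mass shell relation says exactly that `√t·pu·pv = (1/(2√t))·L²/(2tr²)`,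
which cancels the remaining part of `t·k`.
-/

lemma tOf_pos_of_add_pos {u v : ℝ → ℝ} {s : ℝ} (h : 0 < v s + u s) : 0 < tOf u v s := by
  unfold tOf
  positivity

lemma sqrt_tOf {u v : ℝ → ℝ} {s : ℝ} (h : 0 < v s + u s) :
    Real.sqrt (tOf u v s) = (v s + u s) / 2 := by
  rw [show tOf u v s = ((v s + u s) / 2) ^ 2 by unfold tOf; ring]
  exact Real.sqrt_sq (by positivity)

lemma hasDerivAt_tOf {u v : ℝ → ℝ} {a b s : ℝ} (h : 0 < v s + u s)
    (hu : HasDerivAt u a s) (hv : HasDerivAt v b s) :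
    HasDerivAt (tOf u v) (Real.sqrt (tOf u v s) * (a + b)) s := by
  rw [sqrt_tOf h]
  refine (((hv.add hu).pow 2).div_const 4).congr_deriv ?_
  simp only [Pi.add_apply]
  push_cast
  ring

lemma hasDerivAt_mul_of_hasDerivAt_sq_div_sqrt {T p q : ℝ → ℝ} {k s : ℝ} (hT : 0 < T s)
    (hTd : HasDerivAt T (Real.sqrt (T s) * (p s + q s)) s)
    (hp : HasDerivAt p (-p s ^ 2 / Real.sqrt (T s) - k) s) :
    HasDerivAt (fun s' => T s' * p s') (Real.sqrt (T s) * p s * q s - T s * k) s := by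
  refine (hTd.mul hp).congr_deriv ?_
  have hsqrt : Real.sqrt (T s) ≠ 0 := (Real.sqrt_pos.mpr hT).ne'
  field_simp
  linear_combination p s ^ 2 * Real.sq_sqrt hT.le

lemma sqrt_mul_mul_eq_of_massShell {t r a b L : ℝ} (ht : 0 < t) (hr : r ≠ 0)
    (hms : 4 * t ^ 2 * r ^ 2 * a * b = L ^ 2) :
    Real.sqrt t * a * b = 1 / (2 * Real.sqrt t) * L ^ 2 / (2 * t * r ^ 2) := by
  obtain ⟨c, hc, rfl⟩ : ∃ c, 0 < c ∧ t = c ^ 2 :=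
    ⟨Real.sqrt t, Real.sqrt_pos.mpr ht, (Real.sq_sqrt ht.le).symm⟩
  rw [← hms, Real.sqrt_sq hc.le]
  field_simp
  ring

namespace FLRWGeodesicSystem

variable {I : Set ℝ} {L : ℝ} {u v pu pv : ℝ → ℝ} {s : ℝ}

lemma tOf_pos (h : FLRWGeodesicSystem I L u v pu pv) (hs : s ∈ I) : 0 < tOf u v s :=
  tOf_pos_of_add_pos (h.1 s hs)

lemma rOf_pos (h : FLRWGeodesicSystem I L u v pu pv) (hs : s ∈ I) : 0 < rOf u v s :=
  h.2.1 s hs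

lemma hasDerivAt_tOf_mul_pu (h : FLRWGeodesicSystem I L u v pu pv) (hs : s ∈ I) :
    HasDerivAt (fun s' => tOf u v s' * pu s')
      (Real.sqrt (tOf u v s) * pu s * pv s
        - (1 / (2 * Real.sqrt (tOf u v s)) + 1 / rOf u v s) * L ^ 2
            / (2 * tOf u v s * rOf u v s ^ 2)) s := by
  have ht := h.tOf_pos hs
  have hr := h.rOf_pos hs
  obtain ⟨hvu, -, -, -, hu, hv, hpu, -⟩ := h
  refine (hasDerivAt_mul_of_hasDerivAt_sq_div_sqrt ht
    (hasDerivAt_tOf (hvu s hs) (hu s hs) (hv s hs)) (hpu s hs)).congr_deriv ?_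
  field_simp

lemma hasDerivAt_tOf_mul_pv (h : FLRWGeodesicSystem I L u v pu pv) (hs : s ∈ I) :
    HasDerivAt (fun s' => tOf u v s' * pv s')
      (Real.sqrt (tOf u v s) * pu s * pv s
        - (1 / (2 * Real.sqrt (tOf u v s)) - 1 / rOf u v s) * L ^ 2
            / (2 * tOf u v s * rOf u v s ^ 2)) s := by
  have ht := h.tOf_pos hs
  have hr := h.rOf_pos hs
  obtain ⟨hvu, -, -, -, hu, hv, -, hpv⟩ := h
  have htd := hasDerivAt_tOf (hvu s hs) (hu s hs) (hv s hs)
  rw [add_comm] at htd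
  refine (hasDerivAt_mul_of_hasDerivAt_sq_div_sqrt ht htd (hpv s hs)).congr_deriv ?_
  field_simp

lemma hasDerivAt_tOf_mul_sub (h : FLRWGeodesicSystem I L u v pu pv) (hs : s ∈ I) :
    HasDerivAt (fun s' => tOf u v s' * (pv s' - pu s'))
      (L ^ 2 / (tOf u v s * rOf u v s ^ 3)) s := by
  have ht := h.tOf_pos hs
  have hr := h.rOf_pos hs
  simp only [mul_sub]
  refine ((h.hasDerivAt_tOf_mul_pv hs).sub (h.hasDerivAt_tOf_mul_pu hs)).congr_deriv ?_
  field_simp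
  ring

lemma hasDerivAt_tOf_mul_pv_of_massShell (h : FLRWGeodesicSystem I L u v pu pv) (hs : s ∈ I)
    (hms : 4 * tOf u v s ^ 2 * rOf u v s ^ 2 * pu s * pv s = L ^ 2) :
    HasDerivAt (fun s' => tOf u v s' * pv s') (L ^ 2 / (2 * tOf u v s * rOf u v s ^ 3)) s := by
  have ht := h.tOf_pos hs
  have hr := h.rOf_pos hs
  refine (h.hasDerivAt_tOf_mul_pv hs).congr_deriv ?_
  rw [sqrt_mul_mul_eq_of_massShell ht hr.ne' hms]
  field_simp
  ring

lemma hasDerivAt_tOf_mul_pu_of_massShell (h : FLRWGeodesicSystem I L u v pu pv) (hs : s ∈ I)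
    (hms : 4 * tOf u v s ^ 2 * rOf u v s ^ 2 * pu s * pv s = L ^ 2) :
    HasDerivAt (fun s' => tOf u v s' * pu s') (-(L ^ 2 / (2 * tOf u v s * rOf u v s ^ 3))) s := by
  have ht := h.tOf_pos hs
  have hr := h.rOf_pos hs
  refine (h.hasDerivAt_tOf_mul_pu hs).congr_deriv ?_
  rw [sqrt_mul_mul_eq_of_massShell ht hr.ne' hms]
  field_simp
  ring

end FLRWGeodesicSystem

theorem flrw_geodesic_momentum_monotonicity_general (I : Set ℝ) (L : ℝ) (u v pu pv : ℝ → ℝ)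
    (hsys : FLRWGeodesicSystem I L u v pu pv) :
    (∀ s ∈ I,
      HasDerivAt (fun s' => tOf u v s' * (pv s' - pu s'))
        (L ^ 2 / (tOf u v s * (rOf u v s) ^ 3)) s ∧
      0 ≤ L ^ 2 / (tOf u v s * (rOf u v s) ^ 3)) ∧
    ((∀ s ∈ I, 4 * (tOf u v s) ^ 2 * (rOf u v s) ^ 2 * pu s * pv s = L ^ 2) →
      ∀ s ∈ I,
        HasDerivAt (fun s' => tOf u v s' * pv s')
          (L ^ 2 / (2 * tOf u v s * (rOf u v s) ^ 3)) s ∧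
        0 ≤ L ^ 2 / (2 * tOf u v s * (rOf u v s) ^ 3) ∧
        HasDerivAt (fun s' => tOf u v s' * pu s')
          (-(L ^ 2 / (2 * tOf u v s * (rOf u v s) ^ 3))) s ∧
        -(L ^ 2 / (2 * tOf u v s * (rOf u v s) ^ 3)) ≤ 0) := by
  refine ⟨fun s hs => ⟨hsys.hasDerivAt_tOf_mul_sub hs, ?_⟩, fun hms s hs => ?_⟩
  · have ht := hsys.tOf_pos hs
    have hr := hsys.rOf_pos hs
    positivity
  · have ht := hsys.tOf_pos hs
    have hr := hsys.rOf_pos hs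
    have hnonneg : 0 ≤ L ^ 2 / (2 * tOf u v s * rOf u v s ^ 3) := by positivity
    exact ⟨hsys.hasDerivAt_tOf_mul_pv_of_massShell hs (hms s hs), hnonneg,
      hsys.hasDerivAt_tOf_mul_pu_of_massShell hs (hms s hs), neg_nonpos.mpr hnonneg⟩

/-- **Monotonicity of the renormalised momenta along FLRW null geodesics.**
If `(u,v,pu,pv)` solves the FLRW null geodesic system on an interval `I` with angular
momentum `L ≥ 0`, then `(t·(pv − pu))' = L²/(t·r³) ≥ 0` on `I`.  If moreover the mass
shell relation `4t²r²·pu·pv = L²` holds on `I`, then `(t·pv)' = L²/(2t·r³) ≥ 0` and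
`(t·pu)' = −L²/(2t·r³) ≤ 0` on `I`. -/
theorem flrw_geodesic_momentum_monotonicity (I : Set ℝ) (hI : Convex ℝ I)
    (L : ℝ) (hL : 0 ≤ L) (u v pu pv : ℝ → ℝ)
    (hsys : FLRWGeodesicSystem I L u v pu pv) :
    (∀ s ∈ I,
      HasDerivAt (fun s' => tOf u v s' * (pv s' - pu s'))
        (L ^ 2 / (tOf u v s * (rOf u v s) ^ 3)) s ∧
      0 ≤ L ^ 2 / (tOf u v s * (rOf u v s) ^ 3)) ∧
    ((∀ s ∈ I, 4 * (tOf u v s) ^ 2 * (rOf u v s) ^ 2 * pu s * pv s = L ^ 2) →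
      ∀ s ∈ I,
        HasDerivAt (fun s' => tOf u v s' * pv s')
          (L ^ 2 / (2 * tOf u v s * (rOf u v s) ^ 3)) s ∧
        0 ≤ L ^ 2 / (2 * tOf u v s * (rOf u v s) ^ 3) ∧
        HasDerivAt (fun s' => tOf u v s' * pu s')
          (-(L ^ 2 / (2 * tOf u v s * (rOf u v s) ^ 3))) s ∧
        -(L ^ 2 / (2 * tOf u v s * (rOf u v s) ^ 3)) ≤ 0) :=
  flrw_geodesic_momentum_monotonicity_general I L u v pu pv hsys
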